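/- arXiv:2312.03363 — 3 statements merged into one kernel-verified Lean document; each statement's English description precedes it below -/
import Mathlib

section
/- Let x, x̂ : I → ℝ² be continuously differentiable curves on an interval I forming a Darboux pair with parameter λ ∈ ℝ \ {0} and the arc-length polarization m(t) = 1/|x'(t)|², where |x'(t)|² > 0 for all t. If |x̂(t₀)−x(t₀)|² = 1/λ at one point t₀ ∈ I, then m is also the arc-length polarization of x̂, i.e. |x̂'(t)|² = |x'(t)|² = 1/m(t) for all t ∈ I. -/
/-!
Put `v = x̂ - x`. For the arc-length polarization the Darboux relation reads
`x'·x̂' = λ|x'|² v·v`; since `|x'|² ≠ 0`, the split-complex number `x'` is invertible, which gives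
`⟨v, x̂'⟩ = λ|v|²⟨x', v⟩`. Hence `g = λ|v|² - 1` solves the linear ODE `g' = 2λ⟨x', v⟩ g`, so it
vanishes identically once it vanishes at `t₀`. Taking `|·|²` of the Darboux relation, which is
multiplicative, then gives `|x̂'|² = λ²|v|⁴|x'|² = |x'|²`.
-/

/-- The split-complex product on `ℝ²`: `(a,b)·(c,d) = (ac+bd, ad+bc)`. -/
def sprod (u v : ℝ × ℝ) : ℝ × ℝ := (u.1 * v.1 + u.2 * v.2, u.1 * v.2 + u.2 * v.1)

/-- The Lorentz squared norm `|(a,b)|² = a² - b²`. -/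
def lsq (u : ℝ × ℝ) : ℝ := u.1 ^ 2 - u.2 ^ 2

/-- `x, x̂` form a Darboux pair with parameter `λ` and polarization `m` on `I`,
with respect to given derivative functions `x', x̂'`. -/
def DarbouxPair (I : Set ℝ) (x x' xh xh' : ℝ → ℝ × ℝ) (lam : ℝ) (m : ℝ → ℝ) : Prop :=
  ∀ t ∈ I, sprod (x' t) (xh' t) = (lam / m t) • sprod (xh t - x t) (xh t - x t)

open Set

def linner (u w : ℝ × ℝ) : ℝ := u.1 * w.1 - u.2 * w.2

lemma lsq_smul (c : ℝ) (u : ℝ × ℝ) : lsq (c • u) = c ^ 2 * lsq u := by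
  simp only [lsq, Prod.smul_fst, Prod.smul_snd, smul_eq_mul]
  ring

lemma lsq_sprod (u w : ℝ × ℝ) : lsq (sprod u w) = lsq u * lsq w := by
  simp only [lsq, sprod]
  ring

lemma HasDerivAt.lsq {f : ℝ → ℝ × ℝ} {f' : ℝ × ℝ} {t : ℝ} (hf : HasDerivAt f f' t) :
    HasDerivAt (fun s => lsq (f s)) (2 * linner (f t) f') t := by
  have h₁ : HasDerivAt (fun s => (f s).1) f'.1 t := (hasFDerivAt_fst.comp_hasDerivAt t hf :)
  have h₂ : HasDerivAt (fun s => (f s).2) f'.2 t := (hasFDerivAt_snd.comp_hasDerivAt t hf :)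
  exact ((h₁.fun_pow 2).fun_sub (h₂.fun_pow 2)).congr_deriv (by simp only [linner]; ring)

section SplitComplexDivision

variable {X Y V : ℝ × ℝ} {c : ℝ}

lemma lsq_eq_of_sprod_eq (hX : lsq X ≠ 0) (h : sprod X Y = (c * lsq X) • sprod V V) :
    lsq Y = c ^ 2 * lsq X * lsq V ^ 2 := by
  have h' := congrArg lsq h
  rw [lsq_smul, lsq_sprod, lsq_sprod] at h'
  apply mul_left_cancel₀ hX
  linear_combination h'

/-- Multiplying `h` by the conjugate of `X` solves it for `Y`. -/
lemma linner_eq_of_sprod_eq (hX : lsq X ≠ 0) (h : sprod X Y = (c * lsq X) • sprod V V) :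
    linner V Y = c * lsq V * linner X V := by
  have h₁ := congrArg Prod.fst h
  have h₂ := congrArg Prod.snd h
  simp only [sprod, Prod.smul_fst, Prod.smul_snd, smul_eq_mul] at h₁ h₂
  apply mul_left_cancel₀ hX
  simp only [lsq, linner] at hX h₁ h₂ ⊢
  linear_combination (X.1 * V.1 + X.2 * V.2) * h₁ - (X.1 * V.2 + X.2 * V.1) * h₂

end SplitComplexDivision

theorem Set.OrdConnected.eqOn_zero_of_hasDerivAt_smul {E : Type*} [NormedAddCommGroup E]
    [NormedSpace ℝ E] {I : Set ℝ} (hI : I.OrdConnected) {k : ℝ → ℝ} {g : ℝ → E}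
    (hk : ContinuousOn k I) (hg : ∀ s ∈ I, HasDerivAt g (k s • g s) s) {t₀ : ℝ} (ht₀ : t₀ ∈ I)
    (h₀ : g t₀ = 0) : EqOn g 0 I := by
  intro t ht
  have hsub : uIcc t₀ t ⊆ I := hI.uIcc_subset ht₀ ht
  obtain ⟨K, hK⟩ := isCompact_uIcc.exists_bound_of_continuousOn (hk.mono hsub)
  have hlip : ∀ s ∈ uIcc t₀ t, LipschitzOnWith K.toNNReal (fun y : E => k s • y) univ :=
    fun s hs => by
      refine ((lipschitzWith_smul (k s)).weaken ?_).lipschitzOnWith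
      rw [← NNReal.coe_le_coe, coe_nnnorm]
      exact (hK s hs).trans (le_max_left _ _)
  have hgc : ContinuousOn g (uIcc t₀ t) :=
    fun s hs => (hg s (hsub hs)).continuousAt.continuousWithinAt
  have hg' : ∀ s ∈ uIcc t₀ t, HasDerivAt g (k s • g s) s := fun s hs => hg s (hsub hs)
  have h0' : ∀ s : ℝ, HasDerivAt (0 : ℝ → E) (k s • (0 : ℝ → E) s) s := fun s => by
    rw [Pi.zero_apply, smul_zero]
    exact hasDerivAt_const s 0
  rcases le_total t₀ t with hle | hle
  · rw [uIcc_of_le hle] at hlip hgc hg'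
    refine ODE_solution_unique_of_mem_Icc_right (fun s hs => hlip s (Ico_subset_Icc_self hs))
      hgc (fun s hs => (hg' s (Ico_subset_Icc_self hs)).hasDerivWithinAt) (fun _ _ => mem_univ _)
      continuousOn_const (fun s _ => (h0' s).hasDerivWithinAt) (fun _ _ => mem_univ _) h₀
      ⟨hle, le_rfl⟩
  · rw [uIcc_of_ge hle] at hlip hgc hg'
    refine ODE_solution_unique_of_mem_Icc_left (fun s hs => hlip s (Ioc_subset_Icc_self hs))
      hgc (fun s hs => (hg' s (Ioc_subset_Icc_self hs)).hasDerivWithinAt) (fun _ _ => mem_univ _)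
      continuousOn_const (fun s _ => (h0' s).hasDerivWithinAt) (fun _ _ => mem_univ _) h₀
      ⟨le_rfl, hle⟩

section DarbouxPair

variable {x xh : ℝ → ℝ × ℝ} {X Y : ℝ × ℝ} {lam t : ℝ}

lemma DarbouxPair.sprod_eq_of_arclength {I : Set ℝ} {x' xh' : ℝ → ℝ × ℝ} {m : ℝ → ℝ}
    (hpair : DarbouxPair I x x' xh xh' lam m) (hm : m t = 1 / lsq (x' t)) (ht : t ∈ I) :
    sprod (x' t) (xh' t) = (lam * lsq (x' t)) • sprod (xh t - x t) (xh t - x t) := by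
  rw [hpair t ht, hm, div_div_eq_mul_div, div_one]

lemma hasDerivAt_lam_mul_lsq_sub_one (hX : lsq X ≠ 0)
    (hrel : sprod X Y = (lam * lsq X) • sprod (xh t - x t) (xh t - x t))
    (hx : HasDerivAt x X t) (hxh : HasDerivAt xh Y t) :
    HasDerivAt (fun s => lam * lsq (xh s - x s) - 1)
      ((2 * lam * linner X (xh t - x t)) • (lam * lsq (xh t - x t) - 1)) t := by
  have hV := linner_eq_of_sprod_eq hX hrel
  refine ((((hxh.fun_sub hx).lsq).const_mul lam).sub_const 1).congr_deriv ?_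
  simp only [linner, Prod.fst_sub, Prod.snd_sub, smul_eq_mul] at hV ⊢
  linear_combination (2 * lam) * hV

end DarbouxPair

theorem darboux_simultaneous_arclength_general (I : Set ℝ) (hI : I.OrdConnected)
    (x xh x' xh' : ℝ → ℝ × ℝ) (lam : ℝ) (hlam : lam ≠ 0)
    (m : ℝ → ℝ)
    (hsp : ∀ t ∈ I, 0 < lsq (x' t))
    (hm : ∀ t ∈ I, m t = 1 / lsq (x' t))
    (hx : ∀ t ∈ I, HasDerivAt x (x' t) t)
    (hxh : ∀ t ∈ I, HasDerivAt xh (xh' t) t)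
    (hx'c : ContinuousOn x' I)
    (hpair : DarbouxPair I x x' xh xh' lam m)
    (t₀ : ℝ) (ht₀ : t₀ ∈ I) (hinit : lsq (xh t₀ - x t₀) = 1 / lam) :
    ∀ t ∈ I, lsq (xh' t) = lsq (x' t) ∧ lsq (x' t) = 1 / m t := by
  have hX : ∀ t ∈ I, lsq (x' t) ≠ 0 := fun t ht => (hsp t ht).ne'
  have hrel : ∀ t ∈ I, _ := fun t ht => hpair.sprod_eq_of_arclength (hm t ht) ht
  have hv : ContinuousOn (fun s => xh s - x s) I := fun s hs =>
    ((hxh s hs).continuousAt.sub (hx s hs).continuousAt).continuousWithinAt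
  have hk : ContinuousOn (fun s => 2 * lam * linner (x' s) (xh s - x s)) I :=
    continuousOn_const.mul ((hx'c.fst.mul hv.fst).sub (hx'c.snd.mul hv.snd))
  have hzero := hI.eqOn_zero_of_hasDerivAt_smul hk
    (fun s hs => hasDerivAt_lam_mul_lsq_sub_one (hX s hs) (hrel s hs) (hx s hs) (hxh s hs)) ht₀
    (by simp [hinit, hlam])
  intro t ht
  have hlsq : lsq (xh t - x t) = 1 / lam := by
    have : lam * lsq (xh t - x t) - 1 = 0 := hzero ht
    field_simp at this ⊢
    linarith
  refine ⟨?_, by rw [hm t ht, one_div_one_div]⟩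
  rw [lsq_eq_of_sprod_eq (hX t ht) (hrel t ht), hlsq]
  field_simp

/-- For a C¹ Darboux pair on an interval, arc-length polarized for `x`,
if `|x̂−x|² = 1/λ` at one point, then `m` is also the arc-length polarization of `x̂`:
`|x̂'|² = |x'|² = 1/m` everywhere. -/
theorem darboux_simultaneous_arclength (I : Set ℝ) (hI : I.OrdConnected)
    (x xh x' xh' : ℝ → ℝ × ℝ) (lam : ℝ) (hlam : lam ≠ 0)
    (m : ℝ → ℝ)
    (hsp : ∀ t ∈ I, 0 < lsq (x' t))
    (hm : ∀ t ∈ I, m t = 1 / lsq (x' t))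
    (hx : ∀ t ∈ I, HasDerivAt x (x' t) t)
    (hxh : ∀ t ∈ I, HasDerivAt xh (xh' t) t)
    (hx'c : ContinuousOn x' I) (hxh'c : ContinuousOn xh' I)
    (hpair : DarbouxPair I x x' xh xh' lam m)
    (t₀ : ℝ) (ht₀ : t₀ ∈ I) (hinit : lsq (xh t₀ - x t₀) = 1 / lam) :
    ∀ t ∈ I, lsq (xh' t) = lsq (x' t) ∧ lsq (x' t) = 1 / m t :=
  darboux_simultaneous_arclength_general I hI x xh x' xh' lam hlam m hsp hm hx hxh hx'c hpair t₀ ht₀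
    hinit
end

section
/- Let c₁, c₂ ∈ ℝ and let x(t) = (t + c₁, t + c₂) be a lightlike line in ℝ². Then 𝒫(x(t)) tends to the point (π/2 + arctan(c₁−c₂), π/2 − arctan(c₁−c₂)) as t → ∞; in particular the sum of the coordinates of the limit equals π and the difference of its coordinates lies in the open interval (−π, π), so the limit lies on the null infinity boundary of the Penrose diagram. -/
/-! Along the lightlike line the null coordinate `x₁ + x₂` runs off to `+∞` while `x₁ − x₂` stays
equal to `c₁ − c₂`, so `arctan (x₁ + x₂) → π/2` and the Penrose image converges to
`(π/2 + arctan (c₁ − c₂), π/2 − arctan (c₁ − c₂))`. Its coordinates sum to `π`, and their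
difference `2 arctan (c₁ − c₂)` lies strictly between `−π` and `π` because `arctan` takes values in
`(−π/2, π/2)`. -/

open Real Filter

/-- The Penrose map `𝒫(x₁,x₂) = (arctan(x₁+x₂) + arctan(x₁−x₂), arctan(x₁+x₂) − arctan(x₁−x₂))`. -/
noncomputable def Penrose (v : ℝ × ℝ) : ℝ × ℝ :=
  (arctan (v.1 + v.2) + arctan (v.1 - v.2), arctan (v.1 + v.2) - arctan (v.1 - v.2))

theorem tendsto_penrose_of_tendsto_add_atTop {α : Type*} {l : Filter α} {f : α → ℝ × ℝ} {d : ℝ}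
    (h_add : Tendsto (fun a => (f a).1 + (f a).2) l atTop)
    (h_sub : Tendsto (fun a => (f a).1 - (f a).2) l (nhds d)) :
    Tendsto (fun a => Penrose (f a)) l (nhds (π / 2 + arctan d, π / 2 - arctan d)) := by
  have h_arctan_add : Tendsto (fun a => arctan ((f a).1 + (f a).2)) l (nhds (π / 2)) :=
    (tendsto_nhds_of_tendsto_nhdsWithin tendsto_arctan_atTop).comp h_add
  have h_arctan_sub : Tendsto (fun a => arctan ((f a).1 - (f a).2)) l (nhds (arctan d)) :=
    (continuous_arctan.tendsto d).comp h_sub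
  exact (h_arctan_add.add h_arctan_sub).prodMk_nhds (h_arctan_add.sub h_arctan_sub)

theorem two_mul_arctan_mem_Ioo (d : ℝ) : 2 * arctan d ∈ Set.Ioo (-π) π := by
  obtain ⟨h_lower, h_upper⟩ := arctan_mem_Ioo d
  constructor <;> linarith

/-- A lightlike line `x(t) = (t + c₁, t + c₂)` blows up, in the Penrose diagram, to
the point `(π/2 + arctan(c₁−c₂), π/2 − arctan(c₁−c₂))` as `t → ∞`;
the coordinates of the limit sum to `π` and their difference lies in `(−π, π)`,
so the limit is at the null infinity. -/
theorem lightlike_line_null_infinity (c₁ c₂ : ℝ)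
    (x : ℝ → ℝ × ℝ) (hx : ∀ t, x t = (t + c₁, t + c₂)) :
    Tendsto (fun t => Penrose (x t)) atTop
      (nhds (π / 2 + arctan (c₁ - c₂), π / 2 - arctan (c₁ - c₂))) ∧
    (π / 2 + arctan (c₁ - c₂)) + (π / 2 - arctan (c₁ - c₂)) = π ∧
    (π / 2 + arctan (c₁ - c₂)) - (π / 2 - arctan (c₁ - c₂)) ∈ Set.Ioo (-π) π := by
  have h_add : Tendsto (fun t => (x t).1 + (x t).2) atTop atTop := by
    have h_lin : Tendsto (fun t : ℝ => 2 * t + (c₁ + c₂)) atTop atTop :=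
      tendsto_atTop_add_const_right _ _ (tendsto_id.const_mul_atTop two_pos)
    refine h_lin.congr fun t => ?_
    simp only [hx]
    ring
  have h_sub : Tendsto (fun t => (x t).1 - (x t).2) atTop (nhds (c₁ - c₂)) := by
    refine tendsto_const_nhds.congr fun t => ?_
    simp only [hx]
    ring
  refine ⟨tendsto_penrose_of_tendsto_add_atTop h_add h_sub, by ring, ?_⟩
  convert two_mul_arctan_mem_Ioo (c₁ - c₂) using 1
  ring
end

section
/- Let x = (f, g) : I → ℝ² be a differentiable curve, let t* be in the closure of I, and suppose f(t)² − g(t)² ≠ 0 for all t in I. If |x'(t)|² = f'(t)² − g'(t)² tends to 0 as t → t*, then the Lorentz squared norm |(𝒫(σ(x(t))))'|² of the derivative of 𝒫 ∘ σ ∘ x also tends to 0 as t → t*. -/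
/-!
In null coordinates `u = x₁ + x₂`, `v = x₁ − x₂` one has `|x|² = u v`, the inversion `σ` becomes
`(u, v) ↦ (1/v, 1/u)` and `𝒫` becomes `(u, v) ↦ (2 arctan u, 2 arctan v)`. Hence
`|(𝒫 ∘ σ ∘ x)'|² = 4 |x'|² / ((1 + u²)(1 + v²))`: the factor `1/(u v)²` that `σ` introduces is
cancelled exactly by the derivative of `arctan` at `1/u` and `1/v`. So `|(𝒫 ∘ σ ∘ x)'|² ≤ 4 |x'|²`.
-/

open Real Filter

/-- The Lorentz inversion `σ(v) = v / |v|²`. -/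
noncomputable def linv (v : ℝ × ℝ) : ℝ × ℝ := (lsq v)⁻¹ • v

lemma lsq_eq_mul (u : ℝ × ℝ) : lsq u = (u.1 + u.2) * (u.1 - u.2) := by
  unfold lsq; ring

lemma lsq_add_sub (a b : ℝ) : lsq (a + b, a - b) = 4 * a * b := by
  unfold lsq; ring

section Curves

variable {y : ℝ → ℝ × ℝ} {y' : ℝ × ℝ} {t : ℝ}

lemma hasDerivAt_fst_comp (hy : HasDerivAt y y' t) : HasDerivAt (fun s => (y s).1) y'.1 t :=
  hy.fst

lemma hasDerivAt_snd_comp (hy : HasDerivAt y y' t) : HasDerivAt (fun s => (y s).2) y'.2 t :=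
  hy.snd

lemma hasDerivAt_lsq_comp (hy : HasDerivAt y y' t) :
    HasDerivAt (fun s => lsq (y s)) (2 * ((y t).1 * y'.1 - (y t).2 * y'.2)) t :=
  (((hasDerivAt_fst_comp hy).fun_pow 2).fun_sub
    ((hasDerivAt_snd_comp hy).fun_pow 2)).congr_deriv (by ring)

lemma hasDerivAt_penrose_comp (hy : HasDerivAt y y' t) :
    HasDerivAt (fun s => Penrose (y s))
      ((y'.1 + y'.2) / (1 + ((y t).1 + (y t).2) ^ 2)
        + (y'.1 - y'.2) / (1 + ((y t).1 - (y t).2) ^ 2),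
       (y'.1 + y'.2) / (1 + ((y t).1 + (y t).2) ^ 2)
        - (y'.1 - y'.2) / (1 + ((y t).1 - (y t).2) ^ 2)) t := by
  have hu := ((hasDerivAt_fst_comp hy).add (hasDerivAt_snd_comp hy)).arctan
  have hv := ((hasDerivAt_fst_comp hy).sub (hasDerivAt_snd_comp hy)).arctan
  convert (hu.add hv).prodMk (hu.sub hv) using 2 <;>
    simp only [Penrose, Pi.add_apply, Pi.sub_apply] <;> ring

lemma lsq_deriv_penrose (hy : HasDerivAt y y' t) :
    lsq (deriv (fun s => Penrose (y s)) t)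
      = 4 * lsq y' / ((1 + ((y t).1 + (y t).2) ^ 2) * (1 + ((y t).1 - (y t).2) ^ 2)) := by
  rw [(hasDerivAt_penrose_comp hy).deriv, lsq_add_sub, lsq_eq_mul]
  field_simp

lemma hasDerivAt_linv_comp (hy : HasDerivAt y y' t) (h0 : lsq (y t) ≠ 0) :
    HasDerivAt (fun s => linv (y s))
      ((lsq (y t))⁻¹ • y' + (-(2 * ((y t).1 * y'.1 - (y t).2 * y'.2)) / lsq (y t) ^ 2) • y t) t :=
  ((hasDerivAt_lsq_comp hy).inv h0).smul hy

/-- The left side is `|σ'(v) w|²`: the Lorentz inversion is conformal with factor `|v|⁻⁴`. -/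
lemma lsq_linv_deriv (v w : ℝ × ℝ) (h0 : lsq v ≠ 0) :
    lsq ((lsq v)⁻¹ • w + (-(2 * (v.1 * w.1 - v.2 * w.2)) / lsq v ^ 2) • v) = lsq w / lsq v ^ 2 := by
  simp only [lsq] at h0 ⊢
  simp only [Prod.fst_add, Prod.snd_add, Prod.smul_fst, Prod.smul_snd, smul_eq_mul]
  field_simp
  ring

lemma linv_fst_add_snd (v : ℝ × ℝ) (h0 : lsq v ≠ 0) :
    (linv v).1 + (linv v).2 = (v.1 - v.2)⁻¹ := by
  rw [lsq_eq_mul] at h0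
  simp only [linv, lsq_eq_mul, Prod.smul_fst, Prod.smul_snd, smul_eq_mul]
  field_simp [right_ne_zero_of_mul h0, left_ne_zero_of_mul h0]

lemma linv_fst_sub_snd (v : ℝ × ℝ) (h0 : lsq v ≠ 0) :
    (linv v).1 - (linv v).2 = (v.1 + v.2)⁻¹ := by
  rw [lsq_eq_mul] at h0
  simp only [linv, lsq_eq_mul, Prod.smul_fst, Prod.smul_snd, smul_eq_mul]
  field_simp [right_ne_zero_of_mul h0, left_ne_zero_of_mul h0]

lemma lsq_deriv_penrose_linv (hy : HasDerivAt y y' t) (h0 : lsq (y t) ≠ 0) :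
    lsq (deriv (fun s => Penrose (linv (y s))) t)
      = 4 * lsq y' / ((1 + ((y t).1 + (y t).2) ^ 2) * (1 + ((y t).1 - (y t).2) ^ 2)) := by
  rw [lsq_deriv_penrose (hasDerivAt_linv_comp hy h0), lsq_linv_deriv _ _ h0,
    linv_fst_add_snd _ h0, linv_fst_sub_snd _ h0]
  rw [lsq_eq_mul (y t)] at h0 ⊢
  have hu := left_ne_zero_of_mul h0
  have hv := right_ne_zero_of_mul h0
  field_simp
  ring

lemma abs_lsq_deriv_penrose_linv_le (hy : HasDerivAt y y' t) (h0 : lsq (y t) ≠ 0) :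
    |lsq (deriv (fun s => Penrose (linv (y s))) t)| ≤ 4 * |lsq y'| := by
  have hden : 1 ≤ (1 + ((y t).1 + (y t).2) ^ 2) * (1 + ((y t).1 - (y t).2) ^ 2) :=
    one_le_mul_of_one_le_of_one_le (le_add_of_nonneg_right (sq_nonneg _))
      (le_add_of_nonneg_right (sq_nonneg _))
  rw [lsq_deriv_penrose_linv hy h0, abs_div, abs_mul, abs_of_pos (zero_lt_one.trans_le hden),
    abs_of_pos (four_pos : (0 : ℝ) < 4)]
  exact div_le_self (by positivity) hden

end Curves

theorem penrose_inversion_speed_to_zero_general (I : Set ℝ) (x x' : ℝ → ℝ × ℝ)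
    (hx : ∀ t ∈ I, HasDerivAt x (x' t) t)
    (hne : ∀ t ∈ I, (x t).1 ^ 2 - (x t).2 ^ 2 ≠ 0)
    (tstar : ℝ)
    (hlim : Tendsto (fun t => (x' t).1 ^ 2 - (x' t).2 ^ 2)
      (nhdsWithin tstar I) (nhds 0)) :
    Tendsto (fun t => lsq (deriv (fun s => Penrose (linv (x s))) t))
      (nhdsWithin tstar I) (nhds 0) := by
  refine squeeze_zero_norm' ?_ (by simpa using (hlim.abs.const_mul 4))
  filter_upwards [self_mem_nhdsWithin] with t ht
  exact abs_lsq_deriv_penrose_linv_le (hx t ht) (hne t ht)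

/-- If the Lorentz squared speed `|x'|²` of a differentiable curve `x = (f,g)` with
`f² − g² ≠ 0` tends to `0` as `t → t*`, then so does `|(𝒫(σ(x)))'|²`. -/
theorem penrose_inversion_speed_to_zero (I : Set ℝ) (x x' : ℝ → ℝ × ℝ)
    (hx : ∀ t ∈ I, HasDerivAt x (x' t) t)
    (hne : ∀ t ∈ I, (x t).1 ^ 2 - (x t).2 ^ 2 ≠ 0)
    (tstar : ℝ) (htstar : tstar ∈ closure I)
    (hlim : Tendsto (fun t => (x' t).1 ^ 2 - (x' t).2 ^ 2)
      (nhdsWithin tstar I) (nhds 0)) :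
    Tendsto (fun t => lsq (deriv (fun s => Penrose (linv (x s))) t))
      (nhdsWithin tstar I) (nhds 0) :=
  penrose_inversion_speed_to_zero_general I x x' hx hne tstar hlim
end
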